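/- For K ≥ 0 let f_K be the normalized Rician fading density. Let X and Y be independent real-valued random variables, with X having density f_{K_m} for some K_m ≥ 0 and Y exponentially distributed with rate 1 (density e^{-x} on [0,∞)), and let β_m > 0, β_I > 0, γ_t > 0. Then ℙ( β_m·X < γ_t·β_I·Y ) = (γ_t·β_I/(2·β_m + γ_t·β_I))·exp( −2·K_m·β_m/(2·β_m + γ_t·β_I) ). (Lemma 1, Case 2: interference-limited outage with LoS main and NLoS interference links.) -/

import Mathlib

open MeasureTheory ProbabilityTheory Real Filter

/-- Modified Bessel function of the first kind of order zero. -/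
noncomputable def besselI0 (x : ℝ) : ℝ :=
  ∑' n : ℕ, (x / 2) ^ (2 * n) / ((Nat.factorial n : ℝ)) ^ 2

/-- Normalized Rician (noncentral chi-squared, 2 d.o.f., noncentrality 2K) fading density. -/
noncomputable def ricianPdf (K : ℝ) (h : ℝ) : ℝ :=
  if h < 0 then 0
  else (1 / 2) * Real.exp (-K - h / 2) * ∑' n : ℕ, (K * h / 2) ^ n / ((Nat.factorial n : ℝ)) ^ 2

/-- Density of the exponential distribution with rate 1 (supported on [0,∞)). -/
noncomputable def expPdf (x : ℝ) : ℝ := if x < 0 then 0 else Real.exp (-x)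

/-- First-order Marcum Q-function. -/
noncomputable def marcumQ (a b : ℝ) : ℝ :=
  ∫ x in Set.Ioi b, x * Real.exp (-(x ^ 2 + a ^ 2) / 2) * besselI0 (a * x)

open Set

lemma summable_sq (t : ℝ) : Summable (fun n : ℕ => t ^ n / ((Nat.factorial n : ℝ)) ^ 2) := by
  refine Summable.of_abs ?_
  refine Summable.of_nonneg_of_le (fun n => abs_nonneg _) (fun n => ?_)
    (Real.summable_pow_div_factorial |t|)
  have h1 : (1 : ℝ) ≤ (Nat.factorial n : ℝ) := by exact_mod_cast Nat.factorial_pos n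
  rw [abs_div, abs_pow, abs_of_nonneg (by positivity : (0:ℝ) ≤ ((Nat.factorial n : ℝ))^2)]
  apply div_le_div_of_nonneg_left (by positivity) (by positivity)
  exact le_self_pow₀ h1 two_ne_zero

lemma measurable_series (K : ℝ) :
    Measurable (fun x : ℝ => ∑' n : ℕ, (K * x / 2) ^ n / ((Nat.factorial n : ℝ)) ^ 2) := by
  apply measurable_of_tendsto_metrizable
    (f := fun N x => ∑ n ∈ Finset.range N, (K * x / 2) ^ n / ((Nat.factorial n : ℝ)) ^ 2)
  · intro N
    apply Finset.measurable_sum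
    intro n _
    fun_prop
  · rw [tendsto_pi_nhds]
    intro x
    exact (summable_sq (K * x / 2)).hasSum.tendsto_sum_nat

lemma measurable_ricianPdf (K : ℝ) : Measurable (ricianPdf K) := by
  unfold ricianPdf
  exact Measurable.ite (measurableSet_lt measurable_id measurable_const) measurable_const
    ((by fun_prop : Measurable fun x : ℝ => (1 / 2) * Real.exp (-K - x / 2)).mul
      (measurable_series K))

lemma ricianPdf_nonneg {K x : ℝ} (hK : 0 ≤ K) (hx : 0 ≤ x) : 0 ≤ ricianPdf K x := by
  rw [ricianPdf, if_neg (not_lt.mpr hx)]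
  exact mul_nonneg (by positivity) (tsum_nonneg fun n => by positivity)

lemma exp_tail {t : ℝ} (ht : 0 ≤ t) :
    (volume.withDensity fun x => ENNReal.ofReal (expPdf x)) (Ioi t)
      = ENNReal.ofReal (Real.exp (-t)) := by
  rw [withDensity_apply _ measurableSet_Ioi]
  rw [setLIntegral_congr_fun measurableSet_Ioi
    (fun y (hy : t < y) => by rw [expPdf, if_neg (by linarith)])]
  rw [← ofReal_integral_eq_lintegral_ofReal ?_ (ae_of_all _ (fun y => (Real.exp_pos _).le))]
  · rw [integral_exp_neg_Ioi]
  · have := exp_neg_integrableOn_Ioi t (one_pos (α := ℝ))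
    simpa [IntegrableOn] using this

lemma gamma_lint (n : ℕ) {a : ℝ} (ha : 0 < a) :
    ∫⁻ x in Ioi 0, ENNReal.ofReal (x ^ n * Real.exp (-(a * x)))
      = ENNReal.ofReal ((Nat.factorial n : ℝ) / a ^ (n + 1)) := by
  have hint : IntegrableOn (fun x : ℝ => x ^ n * Real.exp (-(a * x))) (Ioi 0) := by
    have h := integrableOn_rpow_mul_exp_neg_mul_rpow (s := (n : ℝ)) (p := 1)
      (b := a) (lt_of_lt_of_le neg_one_lt_zero (Nat.cast_nonneg n)) zero_lt_one ha
    refine h.congr_fun (fun x hx => ?_) measurableSet_Ioi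
    dsimp only
    rw [Real.rpow_natCast, Real.rpow_one, neg_mul]
  rw [← ofReal_integral_eq_lintegral_ofReal hint
    ((ae_restrict_iff' measurableSet_Ioi).2 (ae_of_all _ (fun x hx => by
      have hx0 : 0 < x := hx
      positivity)))]
  congr 1
  have h := integral_rpow_mul_exp_neg_mul_Ioi (a := (n : ℝ) + 1) (r := a) (by positivity) ha
  rw [setIntegral_congr_fun measurableSet_Ioi
    (fun x (hx : 0 < x) => by rw [show ((n:ℝ) + 1 - 1) = (n:ℝ) by ring, Real.rpow_natCast])] at h
  rw [h, Real.Gamma_nat_eq_factorial,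
    show ((n:ℝ) + 1) = ((n + 1 : ℕ) : ℝ) by push_cast; ring, Real.rpow_natCast]
  rw [one_div, inv_pow, div_eq_mul_inv, mul_comm]

lemma key (K b : ℝ) (hK : 0 ≤ K) (hb : 0 < b) :
    ∫⁻ x in Ioi 0, ENNReal.ofReal (ricianPdf K x * Real.exp (-(b * x)))
      = ENNReal.ofReal ((1 / (1 + 2 * b)) * Real.exp (-(2 * K * b) / (1 + 2 * b))) := by
  set a : ℝ := 1 / 2 + b with ha_def
  have ha : 0 < a := by positivity
  set w : ℕ → ℝ → ℝ := fun n x =>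
    ((1 / 2) * Real.exp (-K) * (K / 2) ^ n / ((Nat.factorial n : ℝ)) ^ 2)
      * (x ^ n * Real.exp (-(a * x))) with hw
  have hpt : ∀ x ∈ Ioi (0:ℝ), ENNReal.ofReal (ricianPdf K x * Real.exp (-(b * x)))
      = ∑' n : ℕ, ENNReal.ofReal (w n x) := by
    intro x hx
    have hx0 : 0 < x := hx
    have hc : (1 / 2) * Real.exp (-K - x / 2) * Real.exp (-(b * x))
        = (1 / 2) * Real.exp (-K) * Real.exp (-(a * x)) := by
      rw [mul_assoc, mul_assoc, ← Real.exp_add, ← Real.exp_add]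
      rw [ha_def]
      ring_nf
    have h1 : ricianPdf K x * Real.exp (-(b * x)) = ∑' n : ℕ, w n x := by
      rw [ricianPdf, if_neg (not_lt.mpr hx0.le)]
      calc (1 / 2) * Real.exp (-K - x / 2)
            * (∑' n : ℕ, (K * x / 2) ^ n / ((Nat.factorial n : ℝ)) ^ 2) * Real.exp (-(b * x))
          = ∑' n : ℕ, ((K * x / 2) ^ n / ((Nat.factorial n : ℝ)) ^ 2)
              * ((1 / 2) * Real.exp (-K - x / 2) * Real.exp (-(b * x))) := by
            rw [tsum_mul_right]; ring
        _ = ∑' n : ℕ, w n x := by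
            refine tsum_congr fun n => ?_
            rw [hc, hw]
            simp only
            rw [show K * x / 2 = (K / 2) * x by ring, mul_pow]
            ring
    rw [h1]
    refine ENNReal.ofReal_tsum_of_nonneg (fun n => by positivity) ?_
    refine ((summable_sq (K * x / 2)).mul_left
      ((1 / 2) * Real.exp (-K) * Real.exp (-(a * x)))).congr fun n => ?_
    rw [hw]; simp only
    rw [show K * x / 2 = (K / 2) * x by ring, mul_pow]
    ring
  rw [setLIntegral_congr_fun measurableSet_Ioi hpt]
  rw [lintegral_tsum (fun n => (by fun_prop : Measurable fun x =>
      ENNReal.ofReal (w n x)).aemeasurable)]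
  have hterm : ∀ n : ℕ, ∫⁻ x in Ioi 0, ENNReal.ofReal (w n x)
      = ENNReal.ofReal (((1 / 2) * Real.exp (-K) / a) * ((K / (2 * a)) ^ n
          / (Nat.factorial n : ℝ))) := by
    intro n
    simp only [hw]
    have hcn : 0 ≤ (1 / 2) * Real.exp (-K) * (K / 2) ^ n / ((Nat.factorial n : ℝ)) ^ 2 := by
      positivity
    simp_rw [ENNReal.ofReal_mul hcn]
    rw [lintegral_const_mul' _ _ ENNReal.ofReal_ne_top, gamma_lint n ha,
      ← ENNReal.ofReal_mul hcn]
    congr 1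
    have hfa : (a : ℝ) ≠ 0 := ne_of_gt ha
    have hfn : ((Nat.factorial n : ℝ)) ≠ 0 := by positivity
    rw [div_pow, div_pow, mul_pow]
    field_simp
    ring
  simp_rw [hterm]
  rw [← ENNReal.ofReal_tsum_of_nonneg (fun n => by positivity)
    ((Real.summable_pow_div_factorial (K / (2 * a))).mul_left _)]
  congr 1
  rw [tsum_mul_left, show (∑' n : ℕ, (K / (2 * a)) ^ n / (Nat.factorial n : ℝ))
      = Real.exp (K / (2 * a)) by rw [Real.exp_eq_exp_ℝ, NormedSpace.exp_eq_tsum_div]]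
  have hx1 : Real.exp (-K) * Real.exp (K / (2 * a)) = Real.exp (-(2 * K * b) / (1 + 2 * b)) := by
    rw [← Real.exp_add]
    congr 1
    rw [ha_def]
    field_simp
    ring
  rw [← hx1, ha_def]
  have h1 : (1 / 2 + b : ℝ) ≠ 0 := by positivity
  have h2 : (1 + 2 * b : ℝ) ≠ 0 := by positivity
  field_simp

theorem sir_outage_LoS_NLoS
    {Ω : Type*} [MeasureSpace Ω] [IsProbabilityMeasure (ℙ : Measure Ω)]
    (X Y : Ω → ℝ) (hX : Measurable X) (hY : Measurable Y)
    (hXY : IndepFun X Y ℙ)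
    (Km : ℝ) (hKm : 0 ≤ Km)
    (hXd : Measure.map X ℙ = volume.withDensity fun x => ENNReal.ofReal (ricianPdf Km x))
    (hYd : Measure.map Y ℙ = volume.withDensity fun x => ENNReal.ofReal (expPdf x))
    (βm βI γt : ℝ) (hβm : 0 < βm) (hβI : 0 < βI) (hγt : 0 < γt) :
    (ℙ {ω | βm * X ω < γt * βI * Y ω}).toReal
      = (γt * βI / (2 * βm + γt * βI)) *
          Real.exp (-(2 * Km * βm) / (2 * βm + γt * βI)) := by
  set c : ℝ := γt * βI with hc_def
  have hc : 0 < c := mul_pos hγt hβI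
  haveI hνp : IsProbabilityMeasure (Measure.map Y ℙ) := Measure.isProbabilityMeasure_map hY.aemeasurable
  set S : Set (ℝ × ℝ) := {p : ℝ × ℝ | βm * p.1 < c * p.2} with hS_def
  have hS : MeasurableSet S := measurableSet_lt (measurable_fst.const_mul βm)
    (measurable_snd.const_mul c)
  have hprod := (ProbabilityTheory.indepFun_iff_map_prod_eq_prod_map_map
    hX.aemeasurable hY.aemeasurable).mp hXY
  set g : ℝ → ENNReal := fun x => (Measure.map Y ℙ) (Prod.mk x ⁻¹' S) with hg_def
  have hg : Measurable g := measurable_measure_prodMk_left hS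
  have h1 : ℙ {ω | βm * X ω < c * Y ω} = ∫⁻ x, g x ∂(Measure.map X ℙ) := by
    have : ℙ {ω | βm * X ω < c * Y ω}
        = ((Measure.map X ℙ).prod (Measure.map Y ℙ)) S := by
      rw [← hprod, Measure.map_apply (hX.prodMk hY) hS]
      rfl
    rw [this, Measure.prod_apply hS]
  have h2 : ∫⁻ x, g x ∂(Measure.map X ℙ)
      = ∫⁻ x, ENNReal.ofReal (ricianPdf Km x) * g x := by
    rw [hXd, lintegral_withDensity_eq_lintegral_mul volume
      ((measurable_ricianPdf Km).ennreal_ofReal) hg]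
    rfl
  have h3 : ∫⁻ x, ENNReal.ofReal (ricianPdf Km x) * g x
      = ∫⁻ x in Ioi 0, ENNReal.ofReal (ricianPdf Km x) * g x := by
    rw [← lintegral_indicator measurableSet_Ioi]
    refine lintegral_congr_ae ?_
    have h0 : ∀ᵐ (x : ℝ), x ∉ ({0} : Set ℝ) :=
      compl_mem_ae_iff.mpr (measure_singleton (0:ℝ))
    filter_upwards [h0] with x hx0
    rcases lt_trichotomy x 0 with h | h | h
    · rw [Set.indicator_of_notMem (by simp only [mem_Ioi, not_lt]; linarith),
        ricianPdf, if_pos h]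
      simp
    · exact absurd (by simp [h] : x ∈ ({0} : Set ℝ)) hx0
    · rw [Set.indicator_of_mem (mem_Ioi.mpr h)]
  have h4 : ∫⁻ x in Ioi 0, ENNReal.ofReal (ricianPdf Km x) * g x
      = ∫⁻ x in Ioi 0, ENNReal.ofReal (ricianPdf Km x * Real.exp (-((βm / c) * x))) := by
    refine setLIntegral_congr_fun measurableSet_Ioi (fun x hx => ?_)
    have hx0 : 0 < x := hx
    have hpre : Prod.mk x ⁻¹' S = Ioi (βm * x / c) := by
      ext y
      simp only [hS_def, mem_preimage, mem_setOf_eq, mem_Ioi]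
      rw [div_lt_iff₀ hc, mul_comm c y]
    rw [hg_def]
    simp only
    rw [hpre, hYd, exp_tail (by positivity : (0:ℝ) ≤ βm * x / c),
      ← ENNReal.ofReal_mul (ricianPdf_nonneg hKm hx0.le),
      show -(βm * x / c) = -((βm / c) * x) by ring]
  have h5 := key Km (βm / c) hKm (by positivity)
  have hval : ℙ {ω | βm * X ω < c * Y ω}
      = ENNReal.ofReal ((1 / (1 + 2 * (βm / c)))
          * Real.exp (-(2 * Km * (βm / c)) / (1 + 2 * (βm / c)))) := by
    rw [h1, h2, h3, h4, h5]
  rw [hval, ENNReal.toReal_ofReal (by positivity)]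
  have hc0 : c ≠ 0 := ne_of_gt hc
  have hd : (2 * βm + c : ℝ) ≠ 0 := by positivity
  have h1d : (1 + 2 * (βm / c) : ℝ) ≠ 0 := by positivity
  have harg : -(2 * Km * (βm / c)) / (1 + 2 * (βm / c)) = -(2 * Km * βm) / (2 * βm + c) := by
    field_simp
    ring
  have hco : 1 / (1 + 2 * (βm / c)) = c / (2 * βm + c) := by
    field_simp
    ring
  rw [harg, hco]
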